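/- Let x*, x̂, x̄ be vectors in a real inner product space with ‖x*‖ = 1, ‖x̂‖ ≤ 1, ‖x̄‖ ≤ 1, let α ∈ (1/2, 1], and let E ≥ 0. If ‖x̂‖² ≤ ‖x̄‖² + 2(2α − 1)⟨x̂ − x̄, x*⟩ + E, then ‖x̂ − x*‖² ≤ ‖x̄ − x*‖² + 2(1 − α)/(2α − 1) + E/(2α − 1). -/
import Mathlib


open RealInnerProductSpace

/-- the algebraic inequality used in the proof of Corollary 1. -/
theorem noisy_error_algebraic_bound {E : Type*} [NormedAddCommGroup E]
    [InnerProductSpace ℝ E] (xstar xhat xbar : E) (α Err : ℝ)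
    (hxstar : ‖xstar‖ = 1) (hxhat : ‖xhat‖ ≤ 1) (hxbar : ‖xbar‖ ≤ 1)
    (hα1 : 1 / 2 < α) (hα2 : α ≤ 1) (hErr : 0 ≤ Err)
    (h : ‖xhat‖ ^ 2 ≤ ‖xbar‖ ^ 2 + 2 * (2 * α - 1) * ⟪xhat - xbar, xstar⟫ + Err) :
    ‖xhat - xstar‖ ^ 2 ≤
      ‖xbar - xstar‖ ^ 2 + 2 * (1 - α) / (2 * α - 1) + Err / (2 * α - 1) := by
  have hc : (0:ℝ) < 2 * α - 1 := by linarith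
  rw [inner_sub_left] at h
  rw [@norm_sub_sq_real, @norm_sub_sq_real, hxstar,
    show ‖xbar‖ ^ 2 - 2 * ⟪xbar, xstar⟫ + 1 ^ 2 + 2 * (1 - α) / (2 * α - 1) +
        Err / (2 * α - 1)
      = ‖xbar‖ ^ 2 - 2 * ⟪xbar, xstar⟫ + 1 ^ 2 +
        (2 * (1 - α) + Err) / (2 * α - 1) from by ring,
    ← sub_le_iff_le_add', le_div_iff₀ hc]
  have hb : ⟪xbar, xstar⟫ ≤ 1 := by
    calc ⟪xbar, xstar⟫ ≤ ‖xbar‖ * ‖xstar‖ := real_inner_le_norm _ _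
    _ ≤ 1 := by rw [hxstar]; simpa using hxbar
  have hp : (0:ℝ) ≤ ‖xhat‖ ^ 2 := sq_nonneg _
  have hq : ‖xbar‖ ^ 2 ≤ 1 := by nlinarith [norm_nonneg xbar]
  nlinarith [mul_nonneg (sub_nonneg.2 hα2) hErr,
    mul_le_mul_of_nonneg_left h (sub_nonneg.2 hα2),
    mul_le_mul_of_nonneg_left hq (sub_nonneg.2 hα2)]
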